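/- arXiv:1212.5738 — 2 statements merged into one kernel-verified Lean document; each statement's English description precedes it below -/
import Mathlib

section
/- Let p be a prime, n ≥ 1, and let A ⊆ (ZMod p)^n be 𝓔-compressed. Let i ∈ {1, …, n} and let w ∈ A be an element all of whose coordinates with index ≥ i vanish (i.e., w lies in the span of e₁, …, e_{i−1}). Then A is (e_i − w)-compressed, i.e., C_{e_i − w}(A) = A. -/
open Pointwise

/-- `u ≺ v` in the lexicographic order: `u i < v i` (as values in `{0,…,p-1}`)
at the largest coordinate `i` where `u` and `v` differ. -/
def lexLt {n p : ℕ} (u v : Fin n → ZMod p) : Prop :=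
  ∃ i : Fin n, (u i).val < (v i).val ∧ ∀ j : Fin n, i < j → u j = v j

/-- The `v`-line through `u`: `L_v^u = {u + k•v : k ∈ ZMod p}`. -/
def line {n p : ℕ} (v u : Fin n → ZMod p) : Set (Fin n → ZMod p) :=
  {x | ∃ k : ZMod p, x = u + k • v}

/-- `IS k L`: the set of the `k` lexicographically smallest elements of `L`. -/
def IS {n p : ℕ} (k : ℕ) (L : Set (Fin n → ZMod p)) : Set (Fin n → ZMod p) :=
  {x | x ∈ L ∧ ({y | y ∈ L ∧ lexLt y x}).ncard < k}

/-- The `v`-compression of `A`: on each `v`-line `L`, replace `A ∩ L` by the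
initial segment of `L` of the same cardinality. -/
def comp {n p : ℕ} (v : Fin n → ZMod p) (A : Set (Fin n → ZMod p)) :
    Set (Fin n → ZMod p) :=
  ⋃ u : Fin n → ZMod p, IS (A ∩ line v u).ncard (line v u)

/-- `E = {0, e₁, …, e_n}`: zero together with the standard basis. -/
def stdE (n p : ℕ) : Set (Fin n → ZMod p) :=
  {0} ∪ Set.range (fun i : Fin n => Pi.single i (1 : ZMod p))

/-- `A` is `𝓔`-compressed: `E ⊆ A` and `A` is `v`-compressed for every nonzero `v`
whose compression keeps `E` inside the set. -/
def ECompressed {n p : ℕ} (A : Set (Fin n → ZMod p)) : Prop :=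
  stdE n p ⊆ A ∧
    ∀ v : Fin n → ZMod p, v ≠ 0 → stdE n p ⊆ comp v A → comp v A = A

/-!
Put `v = e_i - w`. Then `v i = 1` and `v` vanishes above `i`, so the points of a `v`-line
agree above coordinate `i` and are told apart by their `i`-th coordinate: the
lexicographic order on the line is the order of that coordinate, and `x` lies in `C_v(A)`
as soon as `(x i).val < |A ∩ L_v^x|`. This puts `0` and every `e_j` with `j ≠ i` (whose
`i`-th coordinate is `0`) into `C_v(A)`, and also `e_i`, whose line contains the second
point `w = e_i - v` of `A`. Thus `E ⊆ C_v(A)`, and `𝓔`-compression gives `C_v(A) = A`.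
-/

lemma mem_line_self {n p : ℕ} (v x : Fin n → ZMod p) : x ∈ line v x := ⟨0, by simp⟩

lemma ZMod.ncard_setOf_val_lt {p : ℕ} [NeZero p] {t : ℕ} (ht : t ≤ p) :
    {z : ZMod p | z.val < t}.ncard = t := by
  have himage : ZMod.val '' {z : ZMod p | z.val < t} = Set.Iio t := by
    ext m
    refine ⟨fun ⟨z, hz, hzm⟩ => hzm ▸ hz, fun hm => ⟨m, ?_, ?_⟩⟩
    · rwa [Set.mem_ofPred_eq, ZMod.val_natCast_of_lt (lt_of_lt_of_le hm ht)]
    · exact ZMod.val_natCast_of_lt (lt_of_lt_of_le hm ht)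
  rw [← ZMod.val_injective p |>.injOn.ncard_image, himage, ← Finset.coe_Iio,
    Set.ncard_coe_finset, Nat.card_Iio]

lemma lexLt_iff_val_lt {n p : ℕ} {u v : Fin n → ZMod p} (i : Fin n)
    (hgt : ∀ j, i < j → u j = v j) (hi : u i = v i → u = v) :
    lexLt u v ↔ (u i).val < (v i).val := by
  refine ⟨fun ⟨m, hlt, hagree⟩ => ?_, fun h => ⟨i, h, hgt⟩⟩
  rcases lt_trichotomy m i with hmi | rfl | hmi
  · rw [hi (hagree i hmi)] at hlt
    exact absurd hlt (lt_irrefl _)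
  · exact hlt
  · rw [hgt m hmi] at hlt
    exact absurd hlt (lt_irrefl _)

section line
variable {n p : ℕ} {v : Fin n → ZMod p} {i : Fin n}

lemma lexLt_iff_val_lt_of_mem_line (hvi : v i = 1) (hvz : ∀ j, i < j → v j = 0)
    {x y : Fin n → ZMod p} (hy : y ∈ line v x) :
    lexLt y x ↔ (y i).val < (x i).val := by
  obtain ⟨k, rfl⟩ := hy
  refine lexLt_iff_val_lt i (fun j hj => by simp [hvz j hj]) fun h => ?_
  have hk : k = 0 := by simpa [hvi] using h
  simp [hk]

lemma ncard_setOf_lexLt_on_line [NeZero p] (hvi : v i = 1) (hvz : ∀ j, i < j → v j = 0)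
    (x : Fin n → ZMod p) :
    {y | y ∈ line v x ∧ lexLt y x}.ncard = (x i).val := by
  have hset : {y | y ∈ line v x ∧ lexLt y x}
      = (fun z : ZMod p => x + (z - x i) • v) '' {z | z.val < (x i).val} := by
    ext y
    constructor
    · rintro ⟨hy, hlt⟩
      obtain ⟨k, rfl⟩ := id hy
      rw [lexLt_iff_val_lt_of_mem_line hvi hvz hy] at hlt
      exact ⟨x i + k, by simpa [hvi] using hlt, by simp⟩
    · rintro ⟨z, hz, rfl⟩
      have hy : x + (z - x i) • v ∈ line v x := ⟨z - x i, rfl⟩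
      refine ⟨hy, ?_⟩
      rw [lexLt_iff_val_lt_of_mem_line hvi hvz hy]
      simpa [hvi] using hz
  have hinj : Function.Injective fun z : ZMod p => x + (z - x i) • v := fun a b hab => by
    simpa [hvi] using congrFun hab i
  rw [hset, hinj.injOn.ncard_image, ZMod.ncard_setOf_val_lt (ZMod.val_lt _).le]

lemma mem_comp_of_val_lt [NeZero p] (hvi : v i = 1) (hvz : ∀ j, i < j → v j = 0)
    {A : Set (Fin n → ZMod p)} {x : Fin n → ZMod p}
    (hx : (x i).val < (A ∩ line v x).ncard) : x ∈ comp v A :=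
  Set.mem_iUnion.2 ⟨x, mem_line_self v x, by rwa [ncard_setOf_lexLt_on_line hvi hvz x]⟩

end line

theorem statement8_general (p n : ℕ) (hp : p.Prime)
    (A : Set (Fin n → ZMod p)) (hA : ECompressed A)
    (i : Fin n) (w : Fin n → ZMod p) (hw : w ∈ A)
    (hwz : ∀ j : Fin n, i ≤ j → w j = 0) :
    comp (Pi.single i 1 - w) A = A := by
  have : Fact p.Prime := ⟨hp⟩
  set v : Fin n → ZMod p := Pi.single i 1 - w
  have hvi : v i = 1 := by simp [v, hwz i le_rfl]
  have hvz : ∀ j, i < j → v j = 0 := fun j hj => by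
    simp [v, hwz j hj.le, Pi.single_eq_of_ne hj.ne']
  have hEA := hA.1
  refine hA.2 v (fun h => one_ne_zero (hvi ▸ congrFun h i)) ?_
  have hsingle : ∀ j, Pi.single j 1 ∈ A := fun j => hEA (Or.inr ⟨j, rfl⟩)
  rintro x (hx | ⟨j, rfl⟩)
  · rw [Set.mem_singleton_iff.1 hx]
    refine mem_comp_of_val_lt hvi hvz ?_
    rw [Pi.zero_apply, ZMod.val_zero, Set.ncard_pos]
    exact ⟨0, hEA (Or.inl rfl), mem_line_self v 0⟩
  · beta_reduce
    refine mem_comp_of_val_lt hvi hvz ?_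
    obtain rfl | hji := eq_or_ne j i
    -- `e_i` needs a second point of `A` on its line: `w = e_i - v`.
    · have hwl : w ∈ line v (Pi.single j 1) := ⟨-1, by simp [v]⟩
      have hne : w ≠ Pi.single j 1 := fun h => by simpa [hwz j le_rfl] using congrFun h j
      rw [Pi.single_eq_same, ZMod.val_one, Set.one_lt_ncard]
      exact ⟨w, ⟨hw, hwl⟩, _, ⟨hsingle j, mem_line_self v _⟩, hne⟩
    · rw [Pi.single_eq_of_ne' hji, ZMod.val_zero, Set.ncard_pos]
      exact ⟨_, hsingle j, mem_line_self v _⟩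

theorem statement8 (p n : ℕ) (hp : p.Prime) (hn : 1 ≤ n)
    (A : Set (Fin n → ZMod p)) (hA : ECompressed A)
    (i : Fin n) (w : Fin n → ZMod p) (hw : w ∈ A)
    (hwz : ∀ j : Fin n, i ≤ j → w j = 0) :
    comp (Pi.single i 1 - w) A = A :=
  statement8_general p n hp A hA i w hw hwz
end

section
/- Let p be a prime, n ≥ 1, and let A ⊆ (ZMod p)^n be 𝓔-compressed. Let h be the maximal index such that H = span{e₁, …, e_h} ⊆ A, assume m := n − h ≥ 1, and let q ∈ {1, …, p−1} be maximal such that A ∩ (q·e_{h+1} + H) is nonempty. Then q·p^h ≤ |A| ≤ (m + q)·p^h; equivalently, since the affine span of A is all of (ZMod p)^n, q/p^m ≤ |A|/|⟨A⟩| ≤ (m+q)/p^m. -/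
open Pointwise

/-- The affine span of `A`: the smallest coset of a subgroup containing `A`,
realized as the intersection of all such cosets. -/
def affSpan {G : Type*} [AddCommGroup G] (A : Set G) : Set G :=
  ⋂₀ {C : Set G | A ⊆ C ∧ ∃ (H : AddSubgroup G) (g : G), C = g +ᵥ (H : Set G)}

/-- The subgroup spanned by the first `h` standard basis vectors `e_1, ..., e_h`. -/
def spanE (p n h : ℕ) : AddSubgroup (Fin n → ZMod p) :=
  AddSubgroup.closure {x | ∃ j : Fin n, (j : ℕ) < h ∧ x = Pi.single j 1}

/-!
Write `e_i` for the standard basis vectors and `H_t = span{e_j : j < t}`. Compressing along a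
direction `v` whose last nonzero coordinate is `t` orders every `v`-line by its `t`-th
coordinate, and such a compression keeps `E` in place as soon as the point `e_t - (v t)⁻¹ • v`
lies in `A`. So an `𝓔`-compressed `A` is closed under all these moves: it is a down-set in each
coordinate, it can trade `e_t` for `e_s` when `s < t`, and, once `H_t ⊆ A`, it is down-closed in
the `t`-th coordinate inside `H_{t+1}`.

With `t = h`, the last fact puts the `q` cosets `k • e_h + H_h`, `k < q`, inside `A`. Conversely,
a point of `A` outside `H_{h+1}` with more than a single `1` above level `h` could be moved to
some `z + e_h + e_i` with `z ∈ H_h` and `i > h`, and from there `A` would climb through all of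
`H_{h+1}`, contradicting the maximality of `h`. Hence `A` is covered by the `q + 1` cosets
`k • e_h + H_h`, `k ≤ q`, and the `m - 1` cosets `e_i + H_h`, `i > h`.
-/

section Lines

variable {n p : ℕ}

lemma line_eq_of_mem {v u x : Fin n → ZMod p} (hx : x ∈ line v u) : line v x = line v u := by
  obtain ⟨k, rfl⟩ := hx
  ext z
  constructor
  · rintro ⟨k', rfl⟩
    exact ⟨k + k', by rw [add_smul, add_assoc]⟩
  · rintro ⟨k', rfl⟩
    exact ⟨k' - k, by rw [sub_smul]; abel⟩

lemma self_mem_line (v x : Fin n → ZMod p) : x ∈ line v x :=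
  ⟨0, by simp⟩

lemma mem_comp_iff {v x : Fin n → ZMod p} {A : Set (Fin n → ZMod p)} :
    x ∈ comp v A ↔ {z | z ∈ line v x ∧ lexLt z x}.ncard < (A ∩ line v x).ncard := by
  constructor
  · intro hx
    obtain ⟨u, hxu, hlt⟩ := Set.mem_iUnion.mp hx
    rwa [← line_eq_of_mem hxu] at hlt
  · exact fun hlt => Set.mem_iUnion.mpr ⟨x, self_mem_line v x, hlt⟩

lemma ncard_setOf_val_lt [NeZero p] {r : ℕ} (hr : r ≤ p) : {s : ZMod p | s.val < r}.ncard = r := by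
  have hinj : Set.InjOn (Nat.cast : ℕ → ZMod p) (Set.Iio r) := fun a ha b hb hab => by
    simpa [ZMod.val_cast_of_lt (lt_of_lt_of_le ha hr),
      ZMod.val_cast_of_lt (lt_of_lt_of_le hb hr)] using congrArg ZMod.val hab
  have himage : (Nat.cast : ℕ → ZMod p) '' Set.Iio r = {s | s.val < r} := by
    ext s
    constructor
    · rintro ⟨a, ha, rfl⟩
      rwa [Set.mem_ofPred_eq, ZMod.val_cast_of_lt (lt_of_lt_of_le ha hr)]
    · exact fun hs => ⟨s.val, hs, ZMod.natCast_zmod_val s⟩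
  rw [← himage, hinj.ncard_image, ← Finset.coe_range, Set.ncard_coe_finset, Finset.card_range]

section Direction

variable [Fact p.Prime] {t : Fin n} {v : Fin n → ZMod p} (hvt : v t ≠ 0)
  (hv : ∀ j, t < j → v j = 0)
include hvt hv

/-- On a `v`-line, `t` is the largest coordinate that varies, so the lexicographic order
there is the order of the `t`-th coordinates. -/
lemma lexLt_add_smul_iff (x : Fin n → ZMod p) (k : ZMod p) :
    lexLt (x + k • v) x ↔ ((x + k • v) t).val < (x t).val := by
  refine ⟨?_, fun hlt => ⟨t, hlt, fun j hj => by simp [hv j hj]⟩⟩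
  rintro ⟨i, hlt, hagree⟩
  rcases lt_trichotomy i t with hit | rfl | hti
  · have hk : k = 0 := by simpa [hvt] using hagree t hit
    simp [hk] at hlt
  · exact hlt
  · simp [hv i hti] at hlt

lemma ncard_lexLt_line (x : Fin n → ZMod p) :
    {z | z ∈ line v x ∧ lexLt z x}.ncard = (x t).val := by
  set g : ZMod p → Fin n → ZMod p := fun s => x + ((s - x t) * (v t)⁻¹) • v
  have hg : ∀ s, g s t = s := fun s => by
    simp [g, mul_assoc, inv_mul_cancel₀ hvt]
  have himage : {z | z ∈ line v x ∧ lexLt z x} = g '' {s | s.val < (x t).val} := by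
    ext z
    constructor
    · rintro ⟨⟨k, rfl⟩, hlex⟩
      refine ⟨(x + k • v) t, (lexLt_add_smul_iff hvt hv x k).mp hlex, ?_⟩
      simp [g, mul_assoc, mul_inv_cancel₀ hvt]
    · rintro ⟨s, hs, rfl⟩
      exact ⟨⟨_, rfl⟩, (lexLt_add_smul_iff hvt hv x _).mpr (by rwa [← hg s] at hs)⟩
  have hginj : g.Injective := fun s s' hss' => by rw [← hg s, hss', hg]
  rw [himage, Set.ncard_image_of_injective _ hginj, ncard_setOf_val_lt (ZMod.val_lt _).le]

lemma mem_comp_iff_val_lt {A : Set (Fin n → ZMod p)} {x : Fin n → ZMod p} :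
    x ∈ comp v A ↔ (x t).val < (A ∩ line v x).ncard := by
  rw [mem_comp_iff, ncard_lexLt_line hvt hv]

end Direction

end Lines

lemma val_one_le_val_of_ne_zero {p : ℕ} [Fact (1 < p)] {c : ZMod p} (hc : c ≠ 0) :
    (1 : ZMod p).val ≤ c.val := by
  rw [ZMod.val_one]
  exact ZMod.val_pos.mpr hc

lemma zero_mem_stdE {n p : ℕ} : (0 : Fin n → ZMod p) ∈ stdE n p := Or.inl rfl

lemma single_mem_stdE {n p : ℕ} (i : Fin n) : (Pi.single i 1 : Fin n → ZMod p) ∈ stdE n p :=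
  Or.inr ⟨i, rfl⟩

section SpanE

variable {n p : ℕ}

lemma single_mem_spanE {k : ℕ} {j : Fin n} (hj : (j : ℕ) < k) :
    (Pi.single j 1 : Fin n → ZMod p) ∈ spanE p n k :=
  AddSubgroup.subset_closure ⟨j, hj, rfl⟩

variable [NeZero p]

lemma val_nsmul_single (t : Fin n) (c : ZMod p) :
    c.val • (Pi.single t 1 : Fin n → ZMod p) = Pi.single t c := by
  rw [← Pi.single_smul', nsmul_one, ZMod.natCast_zmod_val]

lemma mem_spanE_iff {k : ℕ} {x : Fin n → ZMod p} :
    x ∈ spanE p n k ↔ ∀ j : Fin n, k ≤ j → x j = 0 := by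
  constructor
  · intro hx
    have hle : spanE p n k ≤ AddSubgroup.pi {j : Fin n | k ≤ (j : ℕ)} (fun _ => ⊥) := by
      refine (AddSubgroup.closure_le _).mpr ?_
      rintro _ ⟨i, hi, rfl⟩ j hj
      have hji : j ≠ i := by rintro rfl; exact absurd hj (not_le.mpr hi)
      simp [hji]
    simpa [AddSubgroup.mem_pi] using hle hx
  · intro hx
    rw [← Finset.univ_sum_single x]
    refine AddSubgroup.sum_mem _ fun j _ => ?_
    rcases lt_or_ge (j : ℕ) k with hj | hj
    · rw [← val_nsmul_single]
      exact AddSubgroup.nsmul_mem _ (single_mem_spanE hj) _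
    · rw [hx j hj, Pi.single_zero]
      exact zero_mem _

lemma mem_spanE_succ_iff {t : Fin n} {x : Fin n → ZMod p} :
    x ∈ spanE p n (t + 1) ↔ ∀ j : Fin n, t < j → x j = 0 := by
  simp only [mem_spanE_iff, Nat.succ_le_iff, Fin.lt_def]

lemma sub_single_mem_spanE {t : Fin n} {x : Fin n → ZMod p} (hx : x ∈ spanE p n (t + 1)) :
    x - Pi.single t (x t) ∈ spanE p n t := by
  rw [mem_spanE_succ_iff] at hx
  refine mem_spanE_iff.mpr fun j hj => ?_
  rcases (Fin.le_def.mpr hj).eq_or_lt with rfl | htj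
  · simp
  · simp [hx j htj, htj.ne']

lemma apply_add_nsmul_single {t : Fin n} {w : Fin n → ZMod p} (hw : w ∈ spanE p n t) (k : ℕ) :
    (w + k • (Pi.single t 1 : Fin n → ZMod p)) t = k := by
  simp [mem_spanE_iff.mp hw t le_rfl]

lemma add_nsmul_single_mem_spanE_succ {t : Fin n} {w : Fin n → ZMod p} (hw : w ∈ spanE p n t)
    (k : ℕ) : w + k • (Pi.single t 1 : Fin n → ZMod p) ∈ spanE p n (t + 1) :=
  mem_spanE_succ_iff.mpr fun j htj => by simp [mem_spanE_iff.mp hw j htj.le, htj.ne']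

lemma mem_nsmul_single_vadd_spanE_iff {t : Fin n} {k : ℕ} {x : Fin n → ZMod p} :
    x ∈ k • (Pi.single t 1 : Fin n → ZMod p) +ᵥ (spanE p n t : Set (Fin n → ZMod p)) ↔
      x ∈ spanE p n (t + 1) ∧ x t = k := by
  rw [Set.mem_vadd_set_iff_neg_vadd_mem, SetLike.mem_coe, mem_spanE_iff, mem_spanE_succ_iff]
  constructor
  · intro hx
    refine ⟨fun j htj => by simpa [htj.ne'] using hx j htj.le, ?_⟩
    simpa [neg_add_eq_zero, eq_comm] using hx t le_rfl
  · rintro ⟨hx, hxt⟩ j hj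
    rcases (Fin.le_def.mpr hj).eq_or_lt with rfl | htj
    · simp [hxt]
    · simp [hx j htj, htj.ne']

lemma card_spanE {k : ℕ} (hk : k ≤ n) : Nat.card (spanE p n k) = p ^ k := by
  let e : spanE p n k ≃ (Fin k → ZMod p) :=
    { toFun := fun x i => (x : Fin n → ZMod p) (Fin.castLE hk i)
      invFun := fun w => ⟨fun j => if hj : (j : ℕ) < k then w ⟨j, hj⟩ else 0,
        mem_spanE_iff.mpr fun j hj => dif_neg (not_lt.mpr hj)⟩
      left_inv := fun x => Subtype.ext <| funext fun j => by
        by_cases hj : (j : ℕ) < k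
        · simp [hj]
        · simp [hj, mem_spanE_iff.mp x.2 j (not_lt.mp hj)]
      right_inv := fun w => funext fun i => by simp }
  rw [Nat.card_congr e, Nat.card_fun, Nat.card_zmod, Nat.card_fin]

lemma affSpan_eq_univ_of_stdE_subset {A : Set (Fin n → ZMod p)} (hE : stdE n p ⊆ A) :
    affSpan A = Set.univ := by
  refine Set.eq_univ_of_forall fun x => Set.mem_sInter.mpr ?_
  rintro _ ⟨hAC, K, g, rfl⟩
  have hmem : ∀ y ∈ stdE n p, -g + y ∈ K := fun y hy =>
    Set.mem_vadd_set_iff_neg_vadd_mem.mp (hAC (hE hy))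
  have hg : -g ∈ K := by simpa using hmem 0 zero_mem_stdE
  have hK : spanE p n n ≤ K := (AddSubgroup.closure_le _).mpr fun _ ⟨i, _, hi⟩ => by
    simpa [hi] using K.sub_mem (hmem _ (single_mem_stdE i)) hg
  have hx : x ∈ spanE p n n := mem_spanE_iff.mpr fun j hj => absurd j.2 (not_lt.mpr hj)
  exact Set.mem_vadd_set_iff_neg_vadd_mem.mpr (K.add_mem hg (hK hx))

end SpanE

namespace ECompressed

variable {n p : ℕ} [Fact p.Prime] {A : Set (Fin n → ZMod p)}

section Direction

variable {t : Fin n} {v : Fin n → ZMod p} (hvt : v t ≠ 0) (hv : ∀ j, t < j → v j = 0)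
  (hvA : Pi.single t 1 - (v t)⁻¹ • v ∈ A)
include hvt hv hvA

/-- Every point of `E` other than `e_t` is first on its `v`-line; `e_t` is second, preceded by
the point `e_t - (v t)⁻¹ • v`, which `hvA` puts in `A`. -/
lemma stdE_subset_comp (hA : ECompressed A) : stdE n p ⊆ comp v A := by
  intro z hz
  rw [mem_comp_iff_val_lt hvt hv]
  have hzA := hA.1 hz
  have hzt : z t = 0 ∨ z = Pi.single t 1 := by
    rcases hz with rfl | ⟨i, rfl⟩
    · exact Or.inl rfl
    · rcases eq_or_ne i t with rfl | hit
      · exact Or.inr rfl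
      · exact Or.inl (Pi.single_eq_of_ne (Ne.symm hit) _)
  rcases hzt with hzt | rfl
  · rw [hzt, ZMod.val_zero, Set.ncard_pos (Set.toFinite _)]
    exact ⟨z, hzA, self_mem_line v z⟩
  · rw [Pi.single_eq_same, ZMod.val_one, Set.one_lt_ncard (Set.toFinite _)]
    refine ⟨_, ⟨hzA, self_mem_line v _⟩, _, ⟨hvA, -(v t)⁻¹, by rw [neg_smul, sub_eq_add_neg]⟩,
      fun heq => ?_⟩
    simpa [hvt] using congrFun heq t

lemma add_mem (hA : ECompressed A) {y : Fin n → ZMod p} (hy : y ∈ A)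
    (hle : ((y + v) t).val ≤ (y t).val) : y + v ∈ A := by
  have hcomp : comp v A = A :=
    hA.2 v (fun h0 => hvt (by simp [h0])) (hA.stdE_subset_comp hvt hv hvA)
  have hy' := (mem_comp_iff_val_lt hvt hv).mp (hcomp ▸ hy)
  rw [← hcomp, mem_comp_iff_val_lt hvt hv, line_eq_of_mem ⟨1, by rw [one_smul]⟩]
  exact lt_of_le_of_lt hle hy'

end Direction

lemma update_mem (hA : ECompressed A) {y : Fin n → ZMod p} (hy : y ∈ A) (t : Fin n)
    {s : ZMod p} (hs : s.val ≤ (y t).val) : Function.update y t s ∈ A := by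
  rcases eq_or_ne s (y t) with rfl | hne
  · rwa [Function.update_eq_self]
  have hupd : Function.update y t s = y + Pi.single t (s - y t) := by
    ext j
    rcases eq_or_ne j t with rfl | hj
    · simp
    · simp [hj]
  rw [hupd]
  refine hA.add_mem (t := t) (by simpa [sub_eq_zero] using hne) (fun j hj => by simp [hj.ne'])
    ?_ hy (by simpa [← hupd] using hs)
  rw [Pi.single_eq_same, ← Pi.single_smul', smul_eq_mul, inv_mul_cancel₀ (sub_ne_zero.mpr hne),
    sub_self]
  exact hA.1 zero_mem_stdE

lemma mem_of_val_le (hA : ECompressed A) {x y : Fin n → ZMod p} (hy : y ∈ A)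
    (hxy : ∀ j, (x j).val ≤ (y j).val) : x ∈ A := by
  classical
  suffices ∀ s : Finset (Fin n), (fun j => if j ∈ s then x j else y j) ∈ A by
    simpa using this Finset.univ
  intro s
  induction s using Finset.induction_on with
  | empty => simpa using hy
  | insert a s ha ih =>
    convert hA.update_mem ih a (s := x a) (by simp [ha, hxy a]) using 1
    ext j
    rcases eq_or_ne j a with rfl | hj
    · simp
    · simp [hj]

lemma sub_single_add_single_mem (hA : ECompressed A) {y : Fin n → ZMod p} (hy : y ∈ A)
    {s t : Fin n} (hst : s < t) (hyt : y t ≠ 0) :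
    y - Pi.single t 1 + Pi.single s 1 ∈ A := by
  set v : Fin n → ZMod p := Pi.single s 1 - Pi.single t 1 with hv
  have hvt : v t = -1 := by simp [v, hst.ne']
  have hle : ((y + v) t).val ≤ (y t).val := by
    rw [Pi.add_apply, hvt, ← sub_eq_add_neg, ZMod.val_sub (val_one_le_val_of_ne_zero hyt)]
    omega
  convert hA.add_mem (t := t) (by simp [hvt]) (fun j hj => by simp [v, hj.ne', (hst.trans hj).ne'])
    (by simpa [hvt, v] using hA.1 (single_mem_stdE s)) hy hle using 1
  rw [hv]
  abel

variable {t : Fin n}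

lemma mem_of_sub_mem_spanE_of_val_lt (hA : ECompressed A)
    (hH : (spanE p n t : Set (Fin n → ZMod p)) ⊆ A) {a x : Fin n → ZMod p} (ha : a ∈ A)
    (hxa : x - a ∈ spanE p n (t + 1)) (hlt : (x t).val < (a t).val) : x ∈ A := by
  set v := x - a
  have hvt : v t ≠ 0 := sub_ne_zero.mpr fun heq => hlt.ne (by rw [heq])
  have hv := mem_spanE_succ_iff.mp hxa
  have hvA : Pi.single t 1 - (v t)⁻¹ • v ∈ A := hH <| mem_spanE_iff.mpr fun j hj => by
    rcases (Fin.le_def.mpr hj).eq_or_lt with rfl | htj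
    · simp [inv_mul_cancel₀ hvt]
    · simp [hv j htj, htj.ne']
  simpa [v] using hA.add_mem hvt hv hvA ha (by simpa [v] using hlt.le)

/-- From one point `z + e_t + e_i` with `t < i`, moving along the lines of direction
`z' - e_i` with `z' ∈ spanE (t + 1)` climbs the levels of `spanE (t + 1)` one at a time. -/
lemma spanE_succ_subset (hA : ECompressed A) (hH : (spanE p n t : Set (Fin n → ZMod p)) ⊆ A)
    {z : Fin n → ZMod p} (hz : z ∈ spanE p n t) {i : Fin n} (hti : t < i)
    (hb : z + Pi.single t 1 + Pi.single i 1 ∈ A) :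
    (spanE p n (t + 1) : Set (Fin n → ZMod p)) ⊆ A := by
  have hlevel : ∀ k : ℕ, ∀ w ∈ spanE p n t, w + k • Pi.single t 1 ∈ A := by
    intro k
    induction k with
    | zero => exact fun w hw => by simpa using hH hw
    | succ k ih =>
      intro w hw
      set v : Fin n → ZMod p := w - z + k • Pi.single t 1 - Pi.single i 1 with hv_def
      have hvi : v i = -1 := by
        simp [v, mem_spanE_iff.mp hw i hti.le, mem_spanE_iff.mp hz i hti.le, hti.ne]
      have hv : ∀ j, i < j → v j = 0 := fun j hij => by
        have htj : t ≤ j := (hti.trans hij).le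
        simp [v, mem_spanE_iff.mp hw j htj, mem_spanE_iff.mp hz j htj, (hti.trans hij).ne',
          hij.ne']
      have hvA : Pi.single i 1 - (v i)⁻¹ • v ∈ A := by
        convert ih _ (sub_mem hw hz) using 1
        rw [hvi, inv_neg, inv_one, neg_one_smul, sub_neg_eq_add, hv_def]
        abel
      have hsum : z + Pi.single t 1 + Pi.single i 1 + v = w + (k + 1) • Pi.single t 1 := by
        rw [hv_def, add_smul, one_smul]
        abel
      rw [← hsum]
      refine hA.add_mem (by simp [hvi]) hv hvA hb ?_
      rw [hsum, Pi.add_apply, mem_spanE_iff.mp hw i hti.le]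
      simp [hti.ne]
  intro x hx
  have hx' := hlevel (x t).val _ (sub_single_mem_spanE hx)
  rwa [val_nsmul_single, sub_add_cancel] at hx'

/-- Keeping the coordinates below `t` and replacing the nonzero `a j`, `a i` by `1` gives a
point `z + e_j + e_i` of `A`; sliding `e_j` down to `e_t` then fills `spanE (t + 1)`. -/
lemma apply_eq_zero_of_lt (hA : ECompressed A) (hH : (spanE p n t : Set (Fin n → ZMod p)) ⊆ A)
    (hmax : ¬ (spanE p n (t + 1) : Set (Fin n → ZMod p)) ⊆ A) {a : Fin n → ZMod p} (ha : a ∈ A)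
    {i j : Fin n} (htj : t ≤ j) (hji : j < i) (hai : a i ≠ 0) : a j = 0 := by
  by_contra haj
  set z : Fin n → ZMod p := fun k => if k < t then a k else 0
  have hz : z ∈ spanE p n t :=
    mem_spanE_iff.mpr fun k hk => if_neg (not_lt.mpr (Fin.le_def.mpr hk))
  have hti : t < i := htj.trans_lt hji
  have hb : z + Pi.single j 1 + Pi.single i 1 ∈ A := hA.mem_of_val_le ha fun k => by
    rcases eq_or_ne k i with rfl | hki
    · simpa [z, hji.ne', not_lt.mpr hti.le] using val_one_le_val_of_ne_zero hai
    rcases eq_or_ne k j with rfl | hkj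
    · simpa [z, hki, not_lt.mpr htj] using val_one_le_val_of_ne_zero haj
    by_cases hkt : k < t <;> simp [z, hkt, hki, hkj]
  apply hmax
  rcases htj.eq_or_lt with rfl | htj
  · exact hA.spanE_succ_subset hH hz hti hb
  · have hb' := hA.sub_single_add_single_mem hb htj (by simp [z, hji.ne, not_lt.mpr htj.le])
    exact hA.spanE_succ_subset hH hz hti (by convert hb' using 1; abel)

lemma sub_single_mem_spanE_of_apply_ne_zero (hA : ECompressed A)
    (hH : (spanE p n t : Set (Fin n → ZMod p)) ⊆ A)
    (hmax : ¬ (spanE p n (t + 1) : Set (Fin n → ZMod p)) ⊆ A) {a : Fin n → ZMod p} (ha : a ∈ A)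
    {i : Fin n} (hti : t < i) (hai : a i ≠ 0) : a - Pi.single i 1 ∈ spanE p n t := by
  have hzero : ∀ j, t ≤ j → j ≠ i → a j = 0 := fun j htj hji => by
    rcases lt_or_gt_of_ne hji with hlt | hgt
    · exact hA.apply_eq_zero_of_lt hH hmax ha htj hlt hai
    · by_contra haj
      exact hai (hA.apply_eq_zero_of_lt hH hmax ha hti.le hgt haj)
  have hai1 : a i = 1 := by
    by_contra hne
    have ha' := hA.sub_single_add_single_mem ha hti hai
    have := hA.apply_eq_zero_of_lt hH hmax ha' le_rfl hti (by simpa [hti.ne', sub_eq_zero])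
    simp [hzero t le_rfl hti.ne, hti.ne] at this
  refine mem_spanE_iff.mpr fun j hj => ?_
  rcases eq_or_ne j i with rfl | hji
  · simp [hai1]
  · simp [hzero j (Fin.le_def.mpr hj) hji, hji]

lemma val_mul_pow_le_ncard (hA : ECompressed A) (hH : (spanE p n t : Set (Fin n → ZMod p)) ⊆ A)
    {a : Fin n → ZMod p} (ha : a ∈ A) (haH : a ∈ spanE p n (t + 1)) :
    (a t).val * p ^ (t : ℕ) ≤ A.ncard := by
  have hcast : ∀ k : Fin (a t).val, ((k : ℕ) : ZMod p).val = k := fun k =>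
    ZMod.val_cast_of_lt (k.2.trans (ZMod.val_lt _))
  let f : spanE p n t × Fin (a t).val → A := fun wk =>
    ⟨(wk.1 : Fin n → ZMod p) + (wk.2 : ℕ) • Pi.single t 1,
      hA.mem_of_sub_mem_spanE_of_val_lt hH ha
      (sub_mem (add_nsmul_single_mem_spanE_succ wk.1.2 _) haH)
      (by rw [apply_add_nsmul_single wk.1.2, hcast]; exact wk.2.2)⟩
  have hf : f.Injective := by
    rintro ⟨w, k⟩ ⟨w', k'⟩ hwk
    have hsum : (w : Fin n → ZMod p) + (k : ℕ) • Pi.single t 1 =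
        (w' : Fin n → ZMod p) + (k' : ℕ) • Pi.single t 1 :=
      congrArg Subtype.val hwk
    have hk : k = k' := Fin.ext <| by
      rw [← hcast k, ← hcast k', ← apply_add_nsmul_single w.2, hsum, apply_add_nsmul_single w'.2]
    subst hk
    exact Prod.ext (Subtype.ext (add_right_cancel hsum)) rfl
  calc (a t).val * p ^ (t : ℕ) = Nat.card (spanE p n t × Fin (a t).val) := by
        rw [Nat.card_prod, card_spanE t.is_le', Nat.card_fin, mul_comm]
    _ ≤ Nat.card A := Nat.card_le_card_of_injective f hf
    _ = A.ncard := Nat.card_coe_set_eq A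

lemma ncard_le_mul_pow (hA : ECompressed A) (hH : (spanE p n t : Set (Fin n → ZMod p)) ⊆ A)
    (hmax : ¬ (spanE p n (t + 1) : Set (Fin n → ZMod p)) ⊆ A) {q : ℕ}
    (hq : ∀ a ∈ A, a ∈ spanE p n (t + 1) → (a t).val ≤ q) :
    A.ncard ≤ (n - t + q) * p ^ (t : ℕ) := by
  classical
  set B : Finset (Fin n → ZMod p) :=
    (Finset.range (q + 1)).image (fun k : ℕ => k • Pi.single t 1) ∪
      (Finset.Ioi t).image (fun i => Pi.single i 1)
  have hAB : A ⊆ (spanE p n t : Set (Fin n → ZMod p)) + B := by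
    intro a ha
    by_cases haH : a ∈ spanE p n (t + 1)
    · refine ⟨_, sub_single_mem_spanE haH, (a t).val • Pi.single t 1, ?_, ?_⟩
      · exact Finset.mem_union_left _
          (Finset.mem_image_of_mem _ (Finset.mem_range_succ_iff.mpr (hq a ha haH)))
      · rw [val_nsmul_single]
        exact sub_add_cancel _ _
    · obtain ⟨i, hti, hai⟩ : ∃ i, t < i ∧ a i ≠ 0 := by
        simpa [mem_spanE_succ_iff] using haH
      refine ⟨_, hA.sub_single_mem_spanE_of_apply_ne_zero hH hmax ha hti hai, Pi.single i 1,
        ?_, sub_add_cancel _ _⟩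
      exact Finset.mem_union_right _ (Finset.mem_image_of_mem _ (Finset.mem_Ioi.mpr hti))
  have hB : B.card ≤ n - t + q := by
    calc B.card ≤ (Finset.range (q + 1)).card + (Finset.Ioi t).card :=
          (Finset.card_union_le _ _).trans (add_le_add Finset.card_image_le Finset.card_image_le)
      _ = n - t + q := by
          rw [Finset.card_range, Fin.card_Ioi]
          omega
  calc A.ncard ≤ ((spanE p n t : Set (Fin n → ZMod p)) + B).ncard :=
        Set.ncard_le_ncard hAB (Set.toFinite _)
    _ ≤ Nat.card (spanE p n t) * B.card := by
        rw [← Nat.card_coe_set_eq, ← Set.ncard_coe_finset, ← Nat.card_coe_set_eq]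
        exact Set.natCard_add_le
    _ ≤ (n - t + q) * p ^ (t : ℕ) := by
        rw [card_spanE t.is_le', mul_comm]
        exact Nat.mul_le_mul_right _ hB

end ECompressed

theorem statement11_general (p n : ℕ) (hp : p.Prime)
    (A : Set (Fin n → ZMod p)) (hA : ECompressed A)
    (h : ℕ) (hhn : h < n)
    (hhA : (spanE p n h : Set (Fin n → ZMod p)) ⊆ A)
    (hhmax : ∀ k : ℕ, (spanE p n k : Set (Fin n → ZMod p)) ⊆ A → k ≤ h)
    (m : ℕ) (hm : m = n - h)
    (q : ℕ) (hq2 : q ≤ p - 1)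
    (hqne : (A ∩ (q • (Pi.single (⟨h, hhn⟩ : Fin n) 1 : Fin n → ZMod p) +ᵥ
      (spanE p n h : Set (Fin n → ZMod p)))).Nonempty)
    (hqmax : ∀ q' : ℕ, q' ≤ p - 1 →
      (A ∩ (q' • (Pi.single (⟨h, hhn⟩ : Fin n) 1 : Fin n → ZMod p) +ᵥ
        (spanE p n h : Set (Fin n → ZMod p)))).Nonempty → q' ≤ q) :
    q * p ^ h ≤ A.ncard ∧ A.ncard ≤ (m + q) * p ^ h ∧ affSpan A = Set.univ := by
  have := Fact.mk hp
  set t : Fin n := ⟨h, hhn⟩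
  have hmax : ¬ (spanE p n (t + 1) : Set (Fin n → ZMod p)) ⊆ A := fun hsub =>
    Nat.not_succ_le_self h (hhmax _ hsub)
  obtain ⟨a, ha, haq⟩ := hqne
  obtain ⟨haH, hat⟩ := mem_nsmul_single_vadd_spanE_iff.mp haq
  have hqa : (a t).val = q := by
    rw [hat, ZMod.val_cast_of_lt (by have := hp.two_le; omega)]
  have hq : ∀ b ∈ A, b ∈ spanE p n (t + 1) → (b t).val ≤ q := fun b hb hbH =>
    hqmax _ (Nat.le_pred_of_lt (ZMod.val_lt _))
      ⟨b, hb, mem_nsmul_single_vadd_spanE_iff.mpr ⟨hbH, (ZMod.natCast_zmod_val _).symm⟩⟩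
  refine ⟨?_, ?_, affSpan_eq_univ_of_stdE_subset hA.1⟩
  · have hlower := hA.val_mul_pow_le_ncard (t := t) hhA ha haH
    rwa [hqa] at hlower
  · have hupper := hA.ncard_le_mul_pow (t := t) hhA hmax hq
    rwa [← hm] at hupper

theorem statement11 (p n : ℕ) (hp : p.Prime) (hn : 1 ≤ n)
    (A : Set (Fin n → ZMod p)) (hA : ECompressed A)
    (h : ℕ) (hhn : h < n)
    (hhA : (spanE p n h : Set (Fin n → ZMod p)) ⊆ A)
    (hhmax : ∀ k : ℕ, (spanE p n k : Set (Fin n → ZMod p)) ⊆ A → k ≤ h)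
    (m : ℕ) (hm : m = n - h) (hm1 : 1 ≤ m)
    (q : ℕ) (hq1 : 1 ≤ q) (hq2 : q ≤ p - 1)
    (hqne : (A ∩ (q • (Pi.single (⟨h, hhn⟩ : Fin n) 1 : Fin n → ZMod p) +ᵥ
      (spanE p n h : Set (Fin n → ZMod p)))).Nonempty)
    (hqmax : ∀ q' : ℕ, q' ≤ p - 1 →
      (A ∩ (q' • (Pi.single (⟨h, hhn⟩ : Fin n) 1 : Fin n → ZMod p) +ᵥ
        (spanE p n h : Set (Fin n → ZMod p)))).Nonempty → q' ≤ q) :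
    q * p ^ h ≤ A.ncard ∧ A.ncard ≤ (m + q) * p ^ h ∧ affSpan A = Set.univ :=
  statement11_general p n hp A hA h hhn hhA hhmax m hm q hq2 hqne hqmax
end
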